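/- arXiv:math/0102060 — 6 statements merged into one kernel-verified Lean document; each statement's English description precedes it below -/
import Mathlib

section
/- Let ν : G → H be a surjective group homomorphism and let s : H → G be a weak splitting of ν. Let W be the set of all products s(f₁)^{ε₁}⋯s(f_k)^{ε_k} (k ≥ 0, f₁,…,f_k ∈ H, ε₁,…,ε_k ∈ {1,−1}) such that f₁^{ε₁}⋯f_k^{ε_k} = 1 in H. Then W is the underlying set of a subgroup of G, this subgroup is commutative, it witnesses condition (b) of the definition of weak splitting for s, and it is contained in every commutative subgroup G₀ of G witnessing condition (b) for s; that is, W is the smallest such group G₀. -/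
/-- A weak splitting of a surjective group homomorphism `ν : G → H`. -/
def IsWeakSplitting {G H : Type*} [Group G] [Group H] (ν : G →* H) (s : H → G) : Prop :=
  (∀ h, ν (s h) = h) ∧
  ∃ G₀ : Subgroup G,
    (∀ a ∈ G₀, ∀ b ∈ G₀, a * b = b * a) ∧
    ∀ l : List (H × ℤ), (∀ p ∈ l, p.2 = 1 ∨ p.2 = -1) →
      (l.map fun p => p.1 ^ p.2).prod = 1 →
      (l.map fun p => s p.1 ^ p.2).prod ∈ G₀

/-- The set of products `s(f₁)^ε₁ ⋯ s(f_k)^ε_k` where `f₁^ε₁ ⋯ f_k^ε_k = 1` in `H`. -/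
def wordSet {G H : Type*} [Group G] [Group H] (s : H → G) : Set G :=
  {g | ∃ l : List (H × ℤ), (∀ p ∈ l, p.2 = 1 ∨ p.2 = -1) ∧
    (l.map fun p => p.1 ^ p.2).prod = 1 ∧ g = (l.map fun p => s p.1 ^ p.2).prod}


private lemma inv_lemma_aux {H : Type*} {K : Type*} [Group K] (t : H → K)
    (l : List (H × ℤ)) :
    ((l.reverse.map fun p => (p.1, -p.2)).map fun p => t p.1 ^ p.2).prod
      = ((l.map fun p => t p.1 ^ p.2).prod)⁻¹ := by
  induction l with
  | nil => simp
  | cons a l ih =>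
    rw [List.reverse_cons, List.map_append, List.map_append, List.prod_append, ih]
    simp [mul_inv_rev]

/-- If `s` is a weak splitting of `ν`, then the set `W` of products
`s(f₁)^ε₁ ⋯ s(f_k)^ε_k` with `f₁^ε₁ ⋯ f_k^ε_k = 1` is the underlying set of a subgroup
of `G`; this subgroup is commutative, witnesses condition (b) of the definition of weak
splitting, and is contained in every commutative subgroup `G₀` witnessing condition (b);
i.e. it is the smallest such `G₀`. -/
theorem wordSet_smallest_witness {G H : Type*} [Group G] [Group H]
    (ν : G →* H) (hν : Function.Surjective ν)
    (s : H → G) (hs : IsWeakSplitting ν s) :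
    ∃ W : Subgroup G, (W : Set G) = wordSet s ∧
      (∀ a ∈ W, ∀ b ∈ W, a * b = b * a) ∧
      (∀ l : List (H × ℤ), (∀ p ∈ l, p.2 = 1 ∨ p.2 = -1) →
        (l.map fun p => p.1 ^ p.2).prod = 1 →
        (l.map fun p => s p.1 ^ p.2).prod ∈ W) ∧
      (∀ G₀ : Subgroup G, (∀ a ∈ G₀, ∀ b ∈ G₀, a * b = b * a) →
        (∀ l : List (H × ℤ), (∀ p ∈ l, p.2 = 1 ∨ p.2 = -1) →
          (l.map fun p => p.1 ^ p.2).prod = 1 →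
          (l.map fun p => s p.1 ^ p.2).prod ∈ G₀) →
        W ≤ G₀) := by
  classical
  refine ⟨{
    carrier := wordSet s
    one_mem' := ⟨[], by simp, by simp, by simp⟩
    mul_mem' := by
      rintro a b ⟨l₁, h₁, hp₁, rfl⟩ ⟨l₂, h₂, hp₂, rfl⟩
      exact ⟨l₁ ++ l₂, by
        intro p hp; rcases List.mem_append.mp hp with h | h
        · exact h₁ p h
        · exact h₂ p h, by simp [hp₁, hp₂], by simp⟩
    inv_mem' := by
      rintro a ⟨l, h, hp, rfl⟩
      refine ⟨l.reverse.map fun p => (p.1, -p.2), ?_, ?_, ?_⟩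
      · intro p hp'
        simp only [List.mem_map, List.mem_reverse] at hp'
        obtain ⟨q, hq, rfl⟩ := hp'
        rcases h q hq with h1 | h1 <;> simp [h1]
      · rw [inv_lemma_aux (fun h => h) l, hp]; simp
      · rw [inv_lemma_aux s l] }, rfl, ?_, ?_, ?_⟩
  · obtain ⟨hsec, G₀, hcomm, hmem⟩ := hs
    rintro a ⟨l₁, h₁, hp₁, rfl⟩ b ⟨l₂, h₂, hp₂, rfl⟩
    exact hcomm _ (hmem l₁ h₁ hp₁) _ (hmem l₂ h₂ hp₂)
  · intro l h hp
    exact ⟨l, h, hp, rfl⟩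
  · intro G₀ _ hmem a ha
    obtain ⟨l, h, hp, rfl⟩ := ha
    exact hmem l h hp
end

section
/- Let ν : G → H be a surjective group homomorphism, let s : H → G be a weak splitting of ν, and let W be the subgroup of G consisting of all products s(f₁)^{ε₁}⋯s(f_k)^{ε_k} with f₁^{ε₁}⋯f_k^{ε_k} = 1 in H. Then for every g ∈ W and every f ∈ H one has s(f)⁻¹ · g · s(f) ∈ W; consequently the image of s is contained in the normaliser of W in G. -/
/- Conjugating the word `s(f₁)^ε₁ ⋯ s(f_k)^ε_k` by `s(f)^ε` gives the word
`s(f)^(-ε) s(f₁)^ε₁ ⋯ s(f_k)^ε_k s(f)^ε`, whose image `f^(-ε) f₁^ε₁ ⋯ f_k^ε_k f^ε` in `H`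
is still trivial. -/

section wordSet

variable {G H : Type*} [Group G] [Group H] {s : H → G}

theorem zpow_neg_mul_mul_zpow_mem_wordSet {g : G} (hg : g ∈ wordSet s) (f : H) {ε : ℤ}
    (hε : ε = 1 ∨ ε = -1) : s f ^ (-ε) * g * s f ^ ε ∈ wordSet s := by
  obtain ⟨l, hl, hl_one, rfl⟩ := hg
  refine ⟨(f, -ε) :: l ++ [(f, ε)], ?_, ?_, ?_⟩
  · intro p hp
    simp only [List.cons_append, List.mem_cons, List.mem_append, List.not_mem_nil, or_false] at hp
    rcases hp with rfl | hp | rfl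
    · omega
    · exact hl p hp
    · exact hε
  · simp [hl_one]
  · simp [mul_assoc]

theorem inv_mul_mul_mem_wordSet_iff (f : H) (g : G) :
    (s f)⁻¹ * g * s f ∈ wordSet s ↔ g ∈ wordSet s := by
  refine ⟨fun h => ?_, fun h => by simpa using zpow_neg_mul_mul_zpow_mem_wordSet h f (.inl rfl)⟩
  simpa [mul_assoc] using zpow_neg_mul_mul_zpow_mem_wordSet h f (.inr rfl)

end wordSet

theorem image_le_normalizer_wordSet_general {G H : Type*} [Group G] [Group H]
    (s : H → G)
    (W : Subgroup G) (hW : (W : Set G) = wordSet s) :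
    (∀ g ∈ W, ∀ f : H, (s f)⁻¹ * g * s f ∈ W) ∧
      (∀ f : H, s f ∈ Subgroup.normalizer (W : Set G)) := by
  have hmem (g : G) : g ∈ W ↔ g ∈ wordSet s := by rw [← SetLike.mem_coe, hW]
  refine ⟨fun g hg f => ?_, fun f => ?_⟩
  · rw [hmem, inv_mul_mul_mem_wordSet_iff, ← hmem]
    exact hg
  · rw [hW]
    exact Subgroup.mem_set_normalizer_iff''.2 fun g => (inv_mul_mul_mem_wordSet_iff f g).symm

/-- Let `s` be a weak splitting of `ν` and `W` the subgroup of `G` whose underlying set is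
the set of products `s(f₁)^ε₁ ⋯ s(f_k)^ε_k` with `f₁^ε₁ ⋯ f_k^ε_k = 1`.  Then `W` is
closed under conjugation by each `s(f)`, and hence the image of `s` is contained in the
normaliser of `W` in `G`. -/
theorem image_le_normalizer_wordSet {G H : Type*} [Group G] [Group H]
    (ν : G →* H) (hν : Function.Surjective ν)
    (s : H → G) (hs : IsWeakSplitting ν s)
    (W : Subgroup G) (hW : (W : Set G) = wordSet s) :
    (∀ g ∈ W, ∀ f : H, (s f)⁻¹ * g * s f ∈ W) ∧
      (∀ f : H, s f ∈ Subgroup.normalizer (W : Set G)) :=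
  image_le_normalizer_wordSet_general s W hW
end

section
/- Let G be the group of 3×3 upper unitriangular matrices over ℤ/8ℤ (matrices with 1's on the diagonal and 0's below the diagonal) and H the corresponding group over ℤ/2ℤ, and let ν : G → H be the entrywise reduction map modulo 2. Let g₁ = I + δ₁₂ and g₂ = I + δ₂₃ in G. Then for all a, b ∈ G with ν(a) = ν(g₁) and ν(b) = ν(g₂), the elements a² and b² do not commute: a²·b² ≠ b²·a². -/
/-- A 3×3 matrix is upper unitriangular if it has 1's on the diagonal and 0's below it. -/
def IsUnitriangular {R : Type*} [CommRing R] (M : Matrix (Fin 3) (Fin 3) R) : Prop :=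
  (∀ i, M i i = 1) ∧ (∀ i j : Fin 3, j < i → M i j = 0)

/-!
Write `a = I + x δ₁₂ + y δ₁₃ + z δ₂₃` and `b = I + u δ₁₂ + v δ₁₃ + w δ₂₃`. Squaring a
unitriangular matrix doubles its entries next to the diagonal, and the commutator of two
unitriangular matrices only shows in the corner entry, so `(a²b² - b²a²)₁₃ = 4 (x w - u z)`.
The reduction hypotheses say that `x, w` are odd and `u, z` even, so `x w - u z` is odd and
`4 (x w - u z) ≠ 0` in `ℤ/8ℤ`.
-/

section

variable {R : Type*} [CommRing R] {M N : Matrix (Fin 3) (Fin 3) R}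

theorem isUnitriangular_of (x y z : R) : IsUnitriangular !![1, x, y; 0, 1, z; 0, 0, 1] := by
  constructor
  · intro i
    fin_cases i <;> rfl
  · intro i j hij
    fin_cases i <;> fin_cases j <;> first | rfl | exact absurd hij (by decide)

theorem IsUnitriangular.eta (hM : IsUnitriangular M) :
    M = !![1, M 0 1, M 0 2; 0, 1, M 1 2; 0, 0, 1] := by
  obtain ⟨hdiag, hlower⟩ := hM
  ext i j
  fin_cases i <;> fin_cases j <;> simp [hdiag, hlower]

theorem isUnitriangular_one : IsUnitriangular (1 : Matrix (Fin 3) (Fin 3) R) := by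
  simpa [Matrix.one_fin_three] using isUnitriangular_of (0 : R) 0 0

theorem IsUnitriangular.mul (hM : IsUnitriangular M) (hN : IsUnitriangular N) :
    IsUnitriangular (M * N) := by
  rw [hM.eta, hN.eta, Matrix.mul_fin_three]
  simpa using isUnitriangular_of _ _ _

theorem IsUnitriangular.pow (hM : IsUnitriangular M) (n : ℕ) : IsUnitriangular (M ^ n) := by
  induction n with
  | zero => simpa using isUnitriangular_one
  | succ n ih => simpa [pow_succ] using ih.mul hM

theorem IsUnitriangular.sq_apply_zero_one (hM : IsUnitriangular M) : (M ^ 2) 0 1 = 2 * M 0 1 := by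
  rw [sq, hM.eta, Matrix.mul_fin_three]
  simp [two_mul]

theorem IsUnitriangular.sq_apply_one_two (hM : IsUnitriangular M) : (M ^ 2) 1 2 = 2 * M 1 2 := by
  rw [sq, hM.eta, Matrix.mul_fin_three]
  simp [two_mul]

theorem IsUnitriangular.mul_apply_zero_two_sub (hM : IsUnitriangular M) (hN : IsUnitriangular N) :
    (M * N) 0 2 - (N * M) 0 2 = M 0 1 * N 1 2 - N 0 1 * M 1 2 := by
  rw [hM.eta, hN.eta, Matrix.mul_fin_three, Matrix.mul_fin_three]
  simp only [mul_one, mul_zero, add_zero, one_mul, zero_mul, zero_add, Matrix.of_apply,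
    Matrix.cons_val', Matrix.cons_val, Matrix.cons_val_fin_one, Matrix.cons_val_zero,
    Matrix.cons_val_one]
  ring

end

theorem ZMod.four_mul_ne_zero_of_castHom_eq_one :
    ∀ t : ZMod 8, ZMod.castHom (by norm_num : 2 ∣ 8) (ZMod 2) t = 1 → 4 * t ≠ 0 := by
  decide

/-- In the group of 3×3 upper unitriangular matrices over `ℤ/8ℤ`, with `ν` the entrywise
reduction modulo 2 to the unitriangular group over `ℤ/2ℤ`, and `g₁ = I + δ₁₂`,
`g₂ = I + δ₂₃`: for all unitriangular `a, b` over `ℤ/8ℤ` with `ν a = ν g₁` and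
`ν b = ν g₂`, the squares `a²` and `b²` do not commute. -/
theorem sq_not_commute_of_lift_unitriangular
    (a b : Matrix (Fin 3) (Fin 3) (ZMod 8))
    (ha : IsUnitriangular a) (hb : IsUnitriangular b)
    (hared : a.map (ZMod.castHom (show (2:ℕ) ∣ 8 by norm_num) (ZMod 2)) =
      (1 + Matrix.single 0 1 (1 : ZMod 8)).map
        (ZMod.castHom (show (2:ℕ) ∣ 8 by norm_num) (ZMod 2)))
    (hbred : b.map (ZMod.castHom (show (2:ℕ) ∣ 8 by norm_num) (ZMod 2)) =
      (1 + Matrix.single 1 2 (1 : ZMod 8)).map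
        (ZMod.castHom (show (2:ℕ) ∣ 8 by norm_num) (ZMod 2))) :
    a ^ 2 * b ^ 2 ≠ b ^ 2 * a ^ 2 := by
  set ν := ZMod.castHom (show (2:ℕ) ∣ 8 by norm_num) (ZMod 2)
  have ha01 : ν (a 0 1) = 1 := by simpa using congr_fun (congr_fun hared 0) 1
  have ha12 : ν (a 1 2) = 0 := by simpa using congr_fun (congr_fun hared 1) 2
  have hb01 : ν (b 0 1) = 0 := by simpa using congr_fun (congr_fun hbred 0) 1
  have hb12 : ν (b 1 2) = 1 := by simpa using congr_fun (congr_fun hbred 1) 2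
  have hodd : ν (a 0 1 * b 1 2 - b 0 1 * a 1 2) = 1 := by
    simp [ha01, ha12, hb01, hb12]
  intro h
  have corner := (ha.pow 2).mul_apply_zero_two_sub (hb.pow 2)
  rw [h, sub_self, ha.sq_apply_zero_one, ha.sq_apply_one_two, hb.sq_apply_zero_one,
    hb.sq_apply_one_two] at corner
  exact ZMod.four_mul_ne_zero_of_castHom_eq_one _ hodd (by linear_combination -corner)
end

section
/- Let p be an odd prime and m ≥ 1 with p^m > 3, and let n ≥ 3. Let ν : GL_n(ℤ/p^{3m}ℤ) → GL_n(ℤ/p^mℤ) be the group homomorphism induced by entrywise reduction modulo p^m. Then ν is surjective and ν does not weakly split (it has no weak splitting). -/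
/-- Entrywise reduction modulo `p^m` from `GL_n(ℤ/p^{3m}ℤ)` to `GL_n(ℤ/p^mℤ)`,
i.e. between the unit groups of the corresponding matrix rings. -/
noncomputable def matrixReduction (p m n : ℕ) :
    (Matrix (Fin n) (Fin n) (ZMod (p ^ (3 * m))))ˣ →*
      (Matrix (Fin n) (Fin n) (ZMod (p ^ m)))ˣ :=
  Units.map
    ((ZMod.castHom (pow_dvd_pow p (show m ≤ 3 * m by omega)) (ZMod (p ^ m))).mapMatrix).toMonoidHom

open Matrix

theorem IsWeakSplitting.commute_pow {G H : Type*} [Group G] [Group H] {ν : G →* H} {s : H → G}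
    (hs : IsWeakSplitting ν s) {a b : H} {k l : ℕ} (ha : a ^ k = 1) (hb : b ^ l = 1) :
    Commute (s a ^ k) (s b ^ l) := by
  obtain ⟨-, G₀, hcomm, hrel⟩ := hs
  have mem {h : H} {k : ℕ} (hk : h ^ k = 1) : s h ^ k ∈ G₀ := by
    simpa [List.map_replicate, List.prod_replicate] using
      hrel (List.replicate k (h, 1)) (fun q hq => .inl (List.eq_of_mem_replicate hq ▸ rfl))
        (by simpa [List.map_replicate, List.prod_replicate] using hk)
  exact hcomm _ (mem ha) _ (mem hb)

theorem Odd.dvd_choose_two {N : ℕ} (hN : Odd N) : N ∣ N.choose 2 := by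
  rw [Nat.choose_two_right, Nat.mul_div_assoc _ (Nat.Odd.sub_odd hN odd_one).two_dvd]
  exact dvd_mul_right _ _

theorem exists_one_add_pow_eq {S : Type*} [Ring S] (u : S) (N : ℕ) :
    ∃ P : S, (1 + u) ^ N =
      1 + N • u + N.choose 2 • u ^ 2 + N.choose 3 • u ^ 3 + u ^ 4 * P := by
  induction N with
  | zero => exact ⟨0, by simp⟩
  | succ k ih =>
    obtain ⟨P, hP⟩ := ih
    refine ⟨k.choose 3 • 1 + P * (1 + u), ?_⟩
    have h2 : (k + 1).choose 2 = k + k.choose 2 := by simp [Nat.choose_succ_succ]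
    have h3 : (k + 1).choose 3 = k.choose 2 + k.choose 3 := Nat.choose_succ_succ k 2
    rw [pow_succ, hP, h2, h3]
    simp only [mul_add, add_mul, one_mul, mul_one, smul_mul_assoc, mul_smul_comm, ← pow_succ,
      mul_assoc, add_smul, one_smul, ← sq]
    abel

section

variable {R S : Type*} [CommRing R] [Ring S] [Algebra R S]

theorem exists_one_add_add_smul_pow_eq {ε x : R} {E X : S} (hE : E * E = 0)
    (hEXE : E * X * E = x • E) {N : ℕ} (hN : (N : R) = ε) (hN2 : ε ∣ (N.choose 2 : R)) :
    ∃ W : S, (1 + (E + ε • X)) ^ N = 1 + ε • ((1 + N.choose 3 * x) • E + ε • W) := by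
  have hEXE' : E * (X * E) = x • E := by rw [← mul_assoc, hEXE]
  set u := E + ε • X
  set Y := E * (X * X) + X * (E * X) + X * (X * E) + ε • (X * (X * X))
  have hu2 : u ^ 2 = ε • (E * X + X * E + ε • (X * X)) := by
    simp only [u, sq, mul_add, add_mul, smul_mul_assoc, mul_smul_comm, hE]
    module
  have hu3 : u ^ 3 = (ε * x) • E + ε ^ 2 • Y := by
    simp only [u, Y, pow_succ, pow_zero, one_mul, mul_add, add_mul, smul_mul_assoc, mul_smul_comm,
      mul_assoc, hE, hEXE', mul_zero, smul_zero, zero_add]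
    module
  have hu4 : u ^ 4 = ε ^ 2 • (x • (E * X) + Y * E + ε • (Y * X)) := by
    rw [pow_succ, hu3]
    simp only [u, mul_add, add_mul, smul_mul_assoc, mul_smul_comm, hE]
    module
  obtain ⟨P, hP⟩ := exists_one_add_pow_eq u N
  obtain ⟨t, ht⟩ := hN2
  refine ⟨X + t • (E * X + X * E + ε • (X * X)) + (N.choose 3 : R) • Y +
    (x • (E * X) + Y * E + ε • (Y * X)) * P, ?_⟩
  simp only [hP, ← Nat.cast_smul_eq_nsmul R, hN, ht, hu2, hu3, hu4, u, smul_mul_assoc]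
  module

theorem smul_commutator_eq_zero_of_commute {ε c d : R} (hε : ε ^ 3 = 0) {E F W V : S}
    (h : Commute (1 + ε • (c • E + ε • W)) (1 + ε • (d • F + ε • V))) :
    (ε ^ 2 * (c * d)) • (E * F - F * E) = 0 := by
  set A := c • E + ε • W
  set B := d • F + ε • V
  have hAB : A * B - B * A = (c * d) • (E * F - F * E) + ε • (c • (E * V) + d • (W * F)
      + ε • (W * V) - d • (F * W) - c • (V * E) - ε • (V * W)) := by
    simp only [A, B, mul_add, add_mul, smul_mul_assoc, mul_smul_comm]
    module
  have hcomm : (1 + ε • A) * (1 + ε • B) - (1 + ε • B) * (1 + ε • A) =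
      ε ^ 2 • (A * B - B * A) := by
    simp only [mul_add, add_mul, smul_mul_assoc, mul_smul_comm, one_mul, mul_one]
    module
  rw [← smul_smul, ← sub_eq_zero_of_eq h.eq, hcomm, hAB, smul_add, smul_smul, smul_smul,
    ← pow_succ, hε, zero_smul, add_zero]

end

namespace ZMod

variable {a b : ℕ} [NeZero a]

theorem isUnit_of_isUnit_castHom {k : ℕ} (hba : b ∣ a) (hab : a ∣ b ^ k) {x : ZMod a}
    (hx : IsUnit (castHom hba (ZMod b) x)) : IsUnit x := by
  rw [← natCast_zmod_val x, map_natCast, isUnit_iff_coprime] at hx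
  rw [← natCast_zmod_val x, isUnit_iff_coprime]
  exact (hx.pow_right k).coprime_dvd_right hab

theorem exists_eq_mul_of_castHom_eq_zero (hba : b ∣ a) {x : ZMod a}
    (hx : castHom hba (ZMod b) x = 0) : ∃ z, x = b * z := by
  rw [← natCast_zmod_val x, map_natCast, natCast_eq_zero_iff] at hx
  obtain ⟨t, ht⟩ := hx
  exact ⟨t, by rw [← natCast_zmod_val x, ht, Nat.cast_mul]⟩

end ZMod

namespace Matrix

variable {ι : Type*} {a b : ℕ} [NeZero a]

theorem exists_eq_add_smul_of_map_castHom_eq (hba : b ∣ a) {A B : Matrix ι ι (ZMod a)}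
    (h : A.map (ZMod.castHom hba (ZMod b)) = B.map (ZMod.castHom hba (ZMod b))) :
    ∃ X : Matrix ι ι (ZMod a), A = B + (b : ZMod a) • X := by
  have hdiff (i j : ι) : ZMod.castHom hba (ZMod b) (A i j - B i j) = 0 := by
    rw [map_sub, sub_eq_zero]
    exact congrFun₂ h i j
  choose X hX using fun i j => ZMod.exists_eq_mul_of_castHom_eq_zero hba (hdiff i j)
  exact ⟨.of X, by ext i j; simp [← hX]⟩

theorem unitsMap_mapMatrix_castHom_surjective [Fintype ι] [DecidableEq ι] {k : ℕ}
    (hba : b ∣ a) (hab : a ∣ b ^ k) :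
    Function.Surjective
      (Units.map (ZMod.castHom hba (ZMod b)).mapMatrix.toMonoidHom :
        (Matrix ι ι (ZMod a))ˣ →* (Matrix ι ι (ZMod b))ˣ) := by
  have : NeZero b := ⟨fun hb => NeZero.ne a (Nat.eq_zero_of_zero_dvd (hb ▸ hba))⟩
  intro B
  set f := ZMod.castHom hba (ZMod b)
  set A : Matrix ι ι (ZMod a) := (B : Matrix ι ι (ZMod b)).map fun x => (x.val : ZMod a)
  have hA : A.map f = B := by ext i j; simp [A, f]
  have hdet : IsUnit A.det := by
    refine ZMod.isUnit_of_isUnit_castHom hba hab ?_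
    rw [RingHom.map_det, RingHom.mapMatrix_apply, hA]
    exact (isUnit_iff_isUnit_det _).mp B.isUnit
  obtain ⟨U, hU⟩ := (isUnit_iff_isUnit_det A).mpr hdet
  exact ⟨U, Units.ext (by simp [hU, hA])⟩

end Matrix

theorem Matrix.SpecialLinearGroup.transvection_pow {ι F : Type*} [DecidableEq ι] [Fintype ι]
    [CommRing F] {i j : ι} (hij : i ≠ j) (c : F) (k : ℕ) :
    transvection hij c ^ k = transvection hij (k • c) := by
  induction k with
  | zero => simp
  | succ k ih => rw [pow_succ, ih, ← transvection_add, succ_nsmul]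

theorem matrixReduction_surjective {p : ℕ} (hp : p ≠ 0) (m n : ℕ) :
    Function.Surjective (matrixReduction p m n) :=
  have : NeZero (p ^ (3 * m)) := ⟨pow_ne_zero _ hp⟩
  Matrix.unitsMap_mapMatrix_castHom_surjective _ (k := 3) (by rw [← pow_mul, mul_comm])

theorem exists_pow_eq_of_map_castHom_eq_transvection {ι : Type*} [Fintype ι] [DecidableEq ι]
    {p m : ℕ} (hp : p.Prime) (hodd : Odd p) (hpm : p ^ m ≠ 3) {i j : ι} (hij : i ≠ j)
    {g : Matrix ι ι (ZMod (p ^ (3 * m)))}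
    (hg : g.map (ZMod.castHom (pow_dvd_pow p (by omega : m ≤ 3 * m)) (ZMod (p ^ m))) =
      transvection i j 1) :
    ∃ (c : ZMod (p ^ (3 * m))) (W : Matrix ι ι (ZMod (p ^ (3 * m)))), IsUnit c ∧
      g ^ p ^ m = 1 + ((p ^ m : ℕ) : ZMod (p ^ (3 * m))) •
        (c • single i j 1 + ((p ^ m : ℕ) : ZMod (p ^ (3 * m))) • W) := by
  have : NeZero (p ^ (3 * m)) := ⟨pow_ne_zero _ hp.ne_zero⟩
  obtain ⟨X, rfl⟩ := exists_eq_add_smul_of_map_castHom_eq _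
    (hg.trans (by
      simp only [transvection, ← RingHom.mapMatrix_apply, map_add, map_one]
      rw [RingHom.mapMatrix_apply, map_single, map_one]) :
      _ = (transvection i j (1 : ZMod (p ^ (3 * m)))).map _)
  have hE : single i j (1 : ZMod (p ^ (3 * m))) * single i j 1 = 0 :=
    single_mul_single_of_ne 1 i j i hij.symm 1
  have hEXE : single i j 1 * X * single i j 1 = X j i • single i j 1 := by simp
  have hN2 : ((p ^ m : ℕ) : ZMod (p ^ (3 * m))) ∣ ((p ^ m).choose 2 : ℕ) :=
    Nat.cast_dvd_cast (hodd.pow.dvd_choose_two)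
  obtain ⟨W, hW⟩ := exists_one_add_add_smul_pow_eq hE hEXE rfl hN2
  refine ⟨_, W, IsNilpotent.isUnit_one_add ?_, by rwa [transvection, add_assoc]⟩
  obtain ⟨r, hr⟩ := hp.dvd_choose_pow (by norm_num : 3 ≠ 0) hpm.symm
  refine Commute.isNilpotent_mul_right (.all _ _) ⟨3 * m, ?_⟩
  rw [hr, Nat.cast_mul, mul_pow, ← Nat.cast_pow, ZMod.natCast_self, zero_mul]

/-- Let `p` be an odd prime, `m ≥ 1` with `p^m > 3`, and `n ≥ 3`.  Then the reduction
homomorphism `ν : GL_n(ℤ/p^{3m}ℤ) → GL_n(ℤ/p^mℤ)` is surjective and has no weak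
splitting. -/
theorem matrixReduction_not_weaklySplit
    (p m n : ℕ) (hp : p.Prime) (hodd : Odd p) (hm : 1 ≤ m) (hpm : 3 < p ^ m)
    (hn : 3 ≤ n) :
    Function.Surjective (matrixReduction p m n) ∧
      ¬ ∃ s : (Matrix (Fin n) (Fin n) (ZMod (p ^ m)))ˣ →
          (Matrix (Fin n) (Fin n) (ZMod (p ^ (3 * m))))ˣ,
        IsWeakSplitting (matrixReduction p m n) s := by
  refine ⟨matrixReduction_surjective hp.ne_zero m n, ?_⟩
  rintro ⟨s, hs⟩
  set ε : ZMod (p ^ (3 * m)) := ((p ^ m : ℕ) : ZMod (p ^ (3 * m)))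
  have hε3 : ε ^ 3 = 0 := by rw [← Nat.cast_pow, ← pow_mul, mul_comm, ZMod.natCast_self]
  have hε2 : ε ^ 2 ≠ 0 := by
    rw [← Nat.cast_pow, ← pow_mul, Ne, ZMod.natCast_eq_zero_iff,
      Nat.pow_dvd_pow_iff_le_right hp.one_lt]
    omega
  let t {i j : Fin n} (hij : i ≠ j) : (Matrix (Fin n) (Fin n) (ZMod (p ^ m)))ˣ :=
    SpecialLinearGroup.toGL (SpecialLinearGroup.transvection hij 1)
  have ht {i j : Fin n} (hij : i ≠ j) : t hij ^ p ^ m = 1 := by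
    rw [← map_pow, SpecialLinearGroup.transvection_pow, nsmul_eq_mul, mul_one,
      ZMod.natCast_self, SpecialLinearGroup.transvection_coeff_zero, map_one]
  have hlift {i j : Fin n} (hij : i ≠ j) := exists_pow_eq_of_map_castHom_eq_transvection hp hodd
    hpm.ne' hij (congrArg Units.val (hs.1 (t hij)))
  let i : Fin n := ⟨0, by omega⟩
  let j : Fin n := ⟨1, by omega⟩
  have hij : i ≠ j := by simp [i, j]
  obtain ⟨c, W, hc, hW⟩ := hlift hij
  obtain ⟨d, V, hd, hV⟩ := hlift hij.symm
  have hcomm := (hs.commute_pow (ht hij) (ht hij.symm)).units_val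
  rw [Units.val_pow_eq_pow_val, Units.val_pow_eq_pow_val, hW, hV] at hcomm
  have hcommutator : (ε ^ 2 * (c * d)) •
      (single i j (1 : ZMod (p ^ (3 * m))) * single j i 1 - single j i 1 * single i j 1) = 0 :=
    smul_commutator_eq_zero_of_commute hε3 hcomm
  have hii := congrFun₂ hcommutator i i
  simp only [single_mul_single_same, mul_one, Matrix.smul_apply, Matrix.sub_apply,
    single_apply_same, single_apply_of_row_ne hij.symm, sub_zero, smul_eq_mul,
    Matrix.zero_apply] at hii
  exact hε2 ((hc.mul hd).mul_left_eq_zero.mp hii)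
end

section
/- Let G and H be groups, ν : G → H a group homomorphism, and s ⊆ H × G a relation such that: (i) whenever (f,g) ∈ s we have ν(g) = f; (ii) for every f ∈ H there exists g ∈ G with (f,g) ∈ s; (iii) if (f₁,g₁) ∈ s and (f₂,g₂) ∈ s then (f₁f₂, g₁g₂) ∈ s; and (iv) any two elements of s⁻ := {g ∈ G : (1,g) ∈ s} commute with each other. Suppose g₁,…,g_k ∈ G satisfy (ν(g_i), g_i) ∈ s for each i, and ε₁,…,ε_k ∈ {1,−1} are such that ν(g₁)^{ε₁}⋯ν(g_k)^{ε_k} = 1 in H. Then g₁^{ε₁}⋯g_k^{ε_k} lies in the subgroup of G generated by s⁻. -/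
/-!
Let `N` be the subgroup generated by `s⁻`. Because `s` is closed under products and surjects
onto `H`, conjugation by any `x` occurring in `s` preserves `N`: if `(f, x), (f⁻¹, y) ∈ s` then
`x n x⁻¹ = (x n y) (x y)⁻¹` with both factors in `s⁻`. Consequently the pairs `(f, g)` with
`g ∈ N t` for some `(f, t) ∈ s` form a subgroup of `H × G` containing `s`. It contains the pair
`(∏ ν(gᵢ)^{εᵢ}, ∏ gᵢ^{εᵢ}) = (1, ∏ gᵢ^{εᵢ})`, and its elements over `1` lie in `N`.
-/

section RelSaturation

variable {G H : Type*} [Group G] [Group H] {s : Set (H × G)}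

theorem conj_mem_closure (h2 : ∀ f : H, ∃ g : G, (f, g) ∈ s)
    (h3 : ∀ f₁ g₁ f₂ g₂, (f₁, g₁) ∈ s → (f₂, g₂) ∈ s → (f₁ * f₂, g₁ * g₂) ∈ s)
    {f : H} {x n : G} (hx : (f, x) ∈ s)
    (hn : n ∈ Subgroup.closure {g : G | (1, g) ∈ s}) :
    x * n * x⁻¹ ∈ Subgroup.closure {g : G | (1, g) ∈ s} := by
  set N := Subgroup.closure {g : G | (1, g) ∈ s}
  suffices N ≤ N.comap (MulAut.conj x).toMonoidHom from this hn
  refine (Subgroup.closure_le _).2 fun m hm => ?_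
  obtain ⟨y, hy⟩ := h2 f⁻¹
  have hmy : ((1 : H), x * (m * y)) ∈ s := by simpa using h3 _ _ _ _ hx (h3 _ _ _ _ hm hy)
  have hxy : ((1 : H), x * y) ∈ s := by simpa using h3 _ _ _ _ hx hy
  change x * m * x⁻¹ ∈ N
  rw [show x * m * x⁻¹ = (x * (m * y)) * (x * y)⁻¹ by group]
  exact mul_mem (Subgroup.subset_closure hmy) (inv_mem (Subgroup.subset_closure hxy))

def relSaturation (h2 : ∀ f : H, ∃ g : G, (f, g) ∈ s)
    (h3 : ∀ f₁ g₁ f₂ g₂, (f₁, g₁) ∈ s → (f₂, g₂) ∈ s → (f₁ * f₂, g₁ * g₂) ∈ s) :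
    Subgroup (H × G) where
  carrier := {p | ∃ t, (p.1, t) ∈ s ∧ p.2 * t⁻¹ ∈ Subgroup.closure {g : G | (1, g) ∈ s}}
  one_mem' := by
    obtain ⟨t, ht⟩ := h2 1
    exact ⟨t, ht, by simpa using inv_mem (Subgroup.subset_closure (k := {g : G | (1, g) ∈ s}) ht)⟩
  mul_mem' := by
    rintro ⟨f₁, g₁⟩ ⟨f₂, g₂⟩ ⟨t₁, ht₁, hg₁⟩ ⟨t₂, ht₂, hg₂⟩
    refine ⟨t₁ * t₂, h3 _ _ _ _ ht₁ ht₂, ?_⟩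
    change g₁ * g₂ * (t₁ * t₂)⁻¹ ∈ _
    rw [show g₁ * g₂ * (t₁ * t₂)⁻¹ = g₁ * t₁⁻¹ * (t₁ * (g₂ * t₂⁻¹) * t₁⁻¹) by group]
    exact mul_mem hg₁ (conj_mem_closure h2 h3 ht₁ hg₂)
  inv_mem' := by
    rintro ⟨f, g⟩ ⟨t, ht, hg⟩
    obtain ⟨y, hy⟩ := h2 f⁻¹
    have hyt : ((1 : H), y * t) ∈ s := by simpa using h3 _ _ _ _ hy ht
    refine ⟨y, hy, ?_⟩
    change g⁻¹ * y⁻¹ ∈ _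
    rw [show g⁻¹ * y⁻¹ = ((y * t)⁻¹ * (y * (g * t⁻¹) * y⁻¹)⁻¹) by group]
    exact mul_mem (inv_mem (Subgroup.subset_closure hyt))
      (inv_mem (conj_mem_closure h2 h3 hy hg))

theorem subset_relSaturation (h2 : ∀ f : H, ∃ g : G, (f, g) ∈ s)
    (h3 : ∀ f₁ g₁ f₂ g₂, (f₁, g₁) ∈ s → (f₂, g₂) ∈ s → (f₁ * f₂, g₁ * g₂) ∈ s) :
    s ⊆ relSaturation h2 h3 :=
  fun p hp => ⟨p.2, hp, by simp⟩

theorem mem_closure_of_one_mem_relSaturation (h2 : ∀ f : H, ∃ g : G, (f, g) ∈ s)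
    (h3 : ∀ f₁ g₁ f₂ g₂, (f₁, g₁) ∈ s → (f₂, g₂) ∈ s → (f₁ * f₂, g₁ * g₂) ∈ s)
    {g : G} (hg : ((1 : H), g) ∈ relSaturation h2 h3) :
    g ∈ Subgroup.closure {g : G | (1, g) ∈ s} := by
  obtain ⟨t, ht, hgt⟩ := hg
  simpa using mul_mem hgt (Subgroup.subset_closure ht)

end RelSaturation

theorem word_mem_closure_of_rel_general {G H : Type*} [Group G] [Group H]
    (ν : G →* H) (s : Set (H × G))
    (h2 : ∀ f : H, ∃ g : G, (f, g) ∈ s)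
    (h3 : ∀ f₁ g₁ f₂ g₂, (f₁, g₁) ∈ s → (f₂, g₂) ∈ s → (f₁ * f₂, g₁ * g₂) ∈ s)
    (l : List (G × ℤ))
    (hmem : ∀ p ∈ l, (ν p.1, p.1) ∈ s)
    (hprod : (l.map fun p => ν p.1 ^ p.2).prod = 1) :
    (l.map fun p => p.1 ^ p.2).prod ∈ Subgroup.closure {g : G | (1, g) ∈ s} := by
  set w := (l.map fun p => ((ν p.1, p.1) : H × G) ^ p.2).prod
  have hw : w ∈ relSaturation h2 h3 := list_prod_mem <| by
    simp only [List.mem_map]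
    rintro _ ⟨p, hp, rfl⟩
    exact zpow_mem (subset_relSaturation h2 h3 (hmem p hp)) _
  have hw_eq : w = ((1 : H), (l.map fun p => p.1 ^ p.2).prod) := by
    rw [← hprod]
    ext
    · change MonoidHom.fst H G w = _
      rw [map_list_prod, List.map_map]
      rfl
    · change MonoidHom.snd H G w = _
      rw [map_list_prod, List.map_map]
      rfl
  exact mem_closure_of_one_mem_relSaturation h2 h3 (hw_eq ▸ hw)

/-- Let `ν : G → H` be a group homomorphism and `s ⊆ H × G` a relation such that
(i) `(f,g) ∈ s → ν g = f`, (ii) every `f ∈ H` has some `g` with `(f,g) ∈ s`,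
(iii) `s` is closed under products, and (iv) the set `s⁻ = {g | (1,g) ∈ s}` is
commutative.  If `g₁,…,g_k ∈ G` satisfy `(ν gᵢ, gᵢ) ∈ s` for each `i`, and
`ε₁,…,ε_k ∈ {1,−1}` are such that `ν(g₁)^{ε₁}⋯ν(g_k)^{ε_k} = 1` in `H`, then
`g₁^{ε₁}⋯g_k^{ε_k}` lies in the subgroup generated by `s⁻`. -/
theorem word_mem_closure_of_rel {G H : Type*} [Group G] [Group H]
    (ν : G →* H) (s : Set (H × G))
    (h1 : ∀ f g, (f, g) ∈ s → ν g = f)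
    (h2 : ∀ f : H, ∃ g : G, (f, g) ∈ s)
    (h3 : ∀ f₁ g₁ f₂ g₂, (f₁, g₁) ∈ s → (f₂, g₂) ∈ s → (f₁ * f₂, g₁ * g₂) ∈ s)
    (h4 : ∀ g₁ g₂ : G, (1, g₁) ∈ s → (1, g₂) ∈ s → g₁ * g₂ = g₂ * g₁)
    (l : List (G × ℤ))
    (hmem : ∀ p ∈ l, (ν p.1, p.1) ∈ s)
    (hexp : ∀ p ∈ l, p.2 = 1 ∨ p.2 = -1)
    (hprod : (l.map fun p => ν p.1 ^ p.2).prod = 1) :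
    (l.map fun p => p.1 ^ p.2).prod ∈ Subgroup.closure {g : G | (1, g) ∈ s} :=
  word_mem_closure_of_rel_general ν s h2 h3 l hmem hprod
end

section
/- Let G and H be groups, ν : G → H a group homomorphism, and s ⊆ H × G a relation such that: (i) whenever (f,g) ∈ s we have ν(g) = f; (ii) for every f ∈ H there exists g ∈ G with (f,g) ∈ s; (iii) if (f₁,g₁) ∈ s and (f₂,g₂) ∈ s then (f₁f₂, g₁g₂) ∈ s; and (iv) any two elements of s⁻ := {g ∈ G : (1,g) ∈ s} commute with each other. Then ν is surjective, the subgroup ⟨s⁻⟩ of G generated by s⁻ is commutative, and ν has a weak splitting; indeed any function s₀ : H → G with (f, s₀(f)) ∈ s for all f ∈ H is a weak splitting of ν, with G₀ = ⟨s⁻⟩ witnessing condition (b). -/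
/-!
Over each `f ∈ H`, the subgroup `⟨s⟩ ≤ H × G` is contained in the coset `⟨s⁻⟩ c` of any `c` with
`(f, c) ∈ s`: two elements of a fibre of `s` differ by an element of `⟨s⁻⟩`, and conjugation by
such a `c` preserves `⟨s⁻⟩`. A relator `f₁^ε₁ ⋯ f_k^ε_k = 1` of `H` lifts to the word
`∏ (fᵢ, s₀ fᵢ)^εᵢ ∈ ⟨s⟩` lying over `1`, so its second component lies in `⟨s⁻⟩ c` with
`c ∈ s⁻`, that is, in `⟨s⁻⟩`. Finally `⟨s⁻⟩` is commutative because it is generated by pairwise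
commuting elements.
-/

namespace WeakSplitting

/-- The paper's `s⁻`. -/
def relKernel {G H : Type*} [One H] (s : Set (H × G)) : Set G := {g | (1, g) ∈ s}

@[simp]
theorem mem_relKernel {G H : Type*} [One H] {s : Set (H × G)} {g : G} :
    g ∈ relKernel s ↔ (1, g) ∈ s :=
  Iff.rfl

variable {G H : Type*} [Group G] [Group H] {s : Set (H × G)}
  (hsurj : ∀ f : H, ∃ g : G, (f, g) ∈ s) (hmul : ∀ x ∈ s, ∀ y ∈ s, x * y ∈ s)
include hsurj hmul

theorem mul_inv_mem_closure_relKernel {f : H} {a b : G} (ha : (f, a) ∈ s) (hb : (f, b) ∈ s) :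
    a * b⁻¹ ∈ Subgroup.closure (relKernel s) := by
  obtain ⟨d, hd⟩ := hsurj f⁻¹
  have had : a * d ∈ relKernel s := by simpa using hmul _ ha _ hd
  have hbd : b * d ∈ relKernel s := by simpa using hmul _ hb _ hd
  have heq : a * b⁻¹ = (a * d) * (b * d)⁻¹ := by group
  rw [heq]
  exact mul_mem (Subgroup.subset_closure had) (inv_mem (Subgroup.subset_closure hbd))

theorem conj_mem_closure_relKernel {f : H} {c n : G} (hc : (f, c) ∈ s)
    (hn : n ∈ Subgroup.closure (relKernel s)) : c * n * c⁻¹ ∈ Subgroup.closure (relKernel s) := by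
  suffices Subgroup.closure (relKernel s) ≤
      (Subgroup.closure (relKernel s)).comap (MulAut.conj c) from this hn
  refine (Subgroup.closure_le _).2 fun k hk => ?_
  have hck : (f, c * k) ∈ s := by simpa using hmul _ hc _ hk
  exact mul_inv_mem_closure_relKernel hsurj hmul hck hc

theorem exists_mem_rel_of_mem_closure {x : H × G} (hx : x ∈ Subgroup.closure s) :
    ∃ c, (x.1, c) ∈ s ∧ x.2 * c⁻¹ ∈ Subgroup.closure (relKernel s) := by
  induction hx using Subgroup.closure_induction with
  | mem x hx => exact ⟨x.2, hx, by simp⟩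
  | one =>
    obtain ⟨c, hc⟩ := hsurj 1
    exact ⟨c, hc, by simpa using Subgroup.subset_closure (k := relKernel s) hc⟩
  | mul x y _ _ hx hy =>
    obtain ⟨c₁, hc₁, hn₁⟩ := hx
    obtain ⟨c₂, hc₂, hn₂⟩ := hy
    refine ⟨c₁ * c₂, by simpa using hmul _ hc₁ _ hc₂, ?_⟩
    have heq : (x * y).2 * (c₁ * c₂)⁻¹ = (x.2 * c₁⁻¹) * (c₁ * (y.2 * c₂⁻¹) * c₁⁻¹) := by
      simp only [Prod.snd_mul]; group
    rw [heq]
    exact mul_mem hn₁ (conj_mem_closure_relKernel hsurj hmul hc₁ hn₂)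
  | inv x _ hx =>
    obtain ⟨c, hc, hn⟩ := hx
    obtain ⟨d, hd⟩ := hsurj x.1⁻¹
    refine ⟨d, hd, ?_⟩
    have hdc : d * c ∈ relKernel s := by simpa using hmul _ hd _ hc
    have heq : x⁻¹.2 * d⁻¹ = (d * (x.2 * c⁻¹) * d⁻¹ * (d * c))⁻¹ := by
      simp only [Prod.snd_inv]; group
    rw [heq]
    exact inv_mem <|
      mul_mem (conj_mem_closure_relKernel hsurj hmul hd hn) (Subgroup.subset_closure hdc)

theorem mem_closure_relKernel_of_mk_one_mem_closure {g : G}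
    (hg : ((1 : H), g) ∈ Subgroup.closure s) : g ∈ Subgroup.closure (relKernel s) := by
  obtain ⟨c, hc, hn⟩ := exists_mem_rel_of_mem_closure hsurj hmul hg
  simpa using mul_mem hn (Subgroup.subset_closure (k := relKernel s) hc)

theorem list_prod_zpow_mem_closure_relKernel {s₀ : H → G} (hs₀ : ∀ f, (f, s₀ f) ∈ s)
    {l : List (H × ℤ)} (hl : (l.map fun p => p.1 ^ p.2).prod = 1) :
    (l.map fun p => s₀ p.1 ^ p.2).prod ∈ Subgroup.closure (relKernel s) := by
  have hword : (l.map fun p => (p.1, s₀ p.1) ^ p.2).prod ∈ Subgroup.closure s :=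
    list_prod_mem <| List.forall_mem_map.2 fun p _ =>
      zpow_mem (Subgroup.subset_closure (hs₀ p.1)) p.2
  have hsplit : (l.map fun p => (p.1, s₀ p.1) ^ p.2).prod =
      ((l.map fun p => p.1 ^ p.2).prod, (l.map fun p => s₀ p.1 ^ p.2).prod) := by
    ext
    · simpa [List.map_map, Function.comp_def] using
        map_list_prod (MonoidHom.fst H G) (l.map fun p => (p.1, s₀ p.1) ^ p.2)
    · simpa [List.map_map, Function.comp_def] using
        map_list_prod (MonoidHom.snd H G) (l.map fun p => (p.1, s₀ p.1) ^ p.2)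
  rw [hsplit, hl] at hword
  exact mem_closure_relKernel_of_mk_one_mem_closure hsurj hmul hword

end WeakSplitting

/-- Let `ν : G → H` be a group homomorphism and `s ⊆ H × G` a relation such that
(i) `(f,g) ∈ s → ν g = f`, (ii) every `f ∈ H` has some `g` with `(f,g) ∈ s`,
(iii) `s` is closed under products, and (iv) the set `s⁻ = {g | (1,g) ∈ s}` is
commutative.  Then `ν` is surjective, the subgroup `⟨s⁻⟩` generated by `s⁻` is
commutative, `ν` has a weak splitting, and indeed every function `s₀ : H → G` choosing
for each `f` some `s₀ f` with `(f, s₀ f) ∈ s` is a weak splitting of `ν`, with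
`G₀ = ⟨s⁻⟩` witnessing condition (b). -/
theorem weakSplitting_of_rel {G H : Type*} [Group G] [Group H]
    (ν : G →* H) (s : Set (H × G))
    (h1 : ∀ f g, (f, g) ∈ s → ν g = f)
    (h2 : ∀ f : H, ∃ g : G, (f, g) ∈ s)
    (h3 : ∀ f₁ g₁ f₂ g₂, (f₁, g₁) ∈ s → (f₂, g₂) ∈ s → (f₁ * f₂, g₁ * g₂) ∈ s)
    (h4 : ∀ g₁ g₂ : G, (1, g₁) ∈ s → (1, g₂) ∈ s → g₁ * g₂ = g₂ * g₁) :
    Function.Surjective ν ∧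
    (∀ a ∈ Subgroup.closure {g : G | (1, g) ∈ s},
      ∀ b ∈ Subgroup.closure {g : G | (1, g) ∈ s}, a * b = b * a) ∧
    (∃ s₀ : H → G, IsWeakSplitting ν s₀) ∧
    (∀ s₀ : H → G, (∀ f : H, (f, s₀ f) ∈ s) →
      (∀ h, ν (s₀ h) = h) ∧
      (∀ l : List (H × ℤ), (∀ p ∈ l, p.2 = 1 ∨ p.2 = -1) →
        (l.map fun p => p.1 ^ p.2).prod = 1 →
        (l.map fun p => s₀ p.1 ^ p.2).prod ∈
          Subgroup.closure {g : G | (1, g) ∈ s})) := by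
  have hmul : ∀ x ∈ s, ∀ y ∈ s, x * y ∈ s := fun x hx y hy => h3 _ _ _ _ hx hy
  have hcomm : ∀ a ∈ Subgroup.closure (WeakSplitting.relKernel s),
      ∀ b ∈ Subgroup.closure (WeakSplitting.relKernel s), a * b = b * a :=
    isMulCommutative_iff_of_setLike.mp
      (Subgroup.isMulCommutative_closure fun a ha b hb => h4 a b ha hb)
  have hsplit : ∀ s₀ : H → G, (∀ f, (f, s₀ f) ∈ s) →
      (∀ h, ν (s₀ h) = h) ∧
      (∀ l : List (H × ℤ), (∀ p ∈ l, p.2 = 1 ∨ p.2 = -1) →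
        (l.map fun p => p.1 ^ p.2).prod = 1 →
        (l.map fun p => s₀ p.1 ^ p.2).prod ∈ Subgroup.closure (WeakSplitting.relKernel s)) :=
    fun s₀ hs₀ => ⟨fun h => h1 _ _ (hs₀ h),
      fun _ _ hl => WeakSplitting.list_prod_zpow_mem_closure_relKernel h2 hmul hs₀ hl⟩
  choose s₀ hs₀ using h2
  exact ⟨fun f => ⟨s₀ f, h1 _ _ (hs₀ f)⟩, hcomm,
    ⟨s₀, (hsplit s₀ hs₀).1, _, hcomm, (hsplit s₀ hs₀).2⟩, hsplit⟩
end
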